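/- With the setup of the k-SAT reduction (W ∈ ℝ^{m×n} encoding clause/literal signs, b = (-(k-1))·1 ∈ ℝ^m, second layer W₂ = 1ᵀ ∈ ℝ^{1×m}, b₂ = 0), the two-layer ReLU network G₂(z) = ReLU(W₂ · ReLU(W z + b) + b₂) satisfies: there exists z ∈ {-1,1}^n with G₂(z) = 0 if and only if the k-CNF formula φ is satisfiable. -/

import Mathlib

/-!
On a sign vector `z ∈ {-1,1}ⁿ`, every literal of clause `j` contributes `W j i * z i = ±1`
(and `-1` exactly when it is true), so the clause sum is `k` if the clause is false and at
most `k - 2` otherwise. Hence the first-layer unit `ReLU(∑ᵢ W j i z i - (k - 1))` vanishes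
exactly on satisfied clauses, and a sum of ReLUs vanishes iff each summand does.
-/

open Finset

section SignSums

variable {ι R : Type*} [CommRing R] [LinearOrder R] [IsStrictOrderedRing R]

theorem Finset.sum_le_card_sub_one_iff_exists_eq_neg_one {s : Finset ι} {f : ι → R}
    (hf : ∀ i ∈ s, f i = -1 ∨ f i = 1) :
    ∑ i ∈ s, f i ≤ #s - 1 ↔ ∃ i ∈ s, f i = -1 := by
  constructor
  · contrapose!
    intro hno
    have hone : ∀ i ∈ s, f i = 1 := fun i hi => (hf i hi).resolve_left (hno i hi)
    simp [sum_congr rfl hone]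
  · rintro ⟨i₀, hi₀, hfi₀⟩
    -- `1 - f` is nonnegative on `s` and equals `2` at `i₀`
    have hgap : (2 : R) ≤ ∑ i ∈ s, (1 - f i) := by
      have := single_le_sum (f := fun i => 1 - f i)
        (fun i hi => by rcases hf i hi with h | h <;> simp [h]) hi₀
      simpa [hfi₀, one_add_one_eq_two] using this
    rw [sum_sub_distrib] at hgap
    simp only [sum_const, nsmul_eq_mul, mul_one] at hgap
    linarith

theorem Finset.sum_mul_le_card_support_sub_one_iff_exists_mul_eq_neg_one [Fintype ι]
    {w z : ι → R} (hw : ∀ i, w i = -1 ∨ w i = 0 ∨ w i = 1) (hz : ∀ i, z i = -1 ∨ z i = 1) :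
    ∑ i, w i * z i ≤ #{i | w i ≠ 0} - 1 ↔ ∃ i, w i * z i = -1 := by
  have hsupp : ∑ i with w i ≠ 0, w i * z i = ∑ i, w i * z i :=
    sum_filter_of_ne fun i _ h => left_ne_zero_of_mul h
  rw [← hsupp, sum_le_card_sub_one_iff_exists_eq_neg_one]
  · simp only [mem_filter, mem_univ, true_and]
    exact ⟨fun ⟨i, _, hi⟩ => ⟨i, hi⟩,
      fun ⟨i, hi⟩ => ⟨i, fun h => by simp [h] at hi, hi⟩⟩
  · intro i hi
    rw [mem_filter] at hi
    rcases hw i with h | h | h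
    · rcases hz i with h' | h' <;> simp [h, h']
    · exact absurd h hi.2
    · rcases hz i with h' | h' <;> simp [h, h']

end SignSums

theorem Finset.sum_max_zero_le_zero_iff {ι M : Type*} [AddCommMonoid M] [LinearOrder M]
    [IsOrderedAddMonoid M] {s : Finset ι} {a : ι → M} :
    ∑ j ∈ s, max (a j) 0 ≤ 0 ↔ ∀ j ∈ s, a j ≤ 0 := by
  have hnonneg : ∀ j ∈ s, 0 ≤ max (a j) 0 := fun _ _ => le_max_right _ _
  have hsum : 0 ≤ ∑ j ∈ s, max (a j) 0 := sum_nonneg hnonneg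
  rw [hsum.ge_iff_eq', sum_eq_zero_iff_of_nonneg hnonneg]
  simp only [max_eq_right_iff]

theorem stmt_6 (m n k : ℕ)
    (W : Matrix (Fin m) (Fin n) ℝ)
    (hW : ∀ j i, W j i = -1 ∨ W j i = 0 ∨ W j i = 1)
    (hrow : ∀ j, (Finset.univ.filter (fun i => W j i ≠ 0)).card = k) :
    (∃ z : Fin n → ℝ, (∀ i, z i = -1 ∨ z i = 1) ∧
        max ((∑ j, max (∑ i, W j i * z i + (-((k : ℝ) - 1))) 0) + 0) 0 = 0) ↔
      (∃ z : Fin n → ℝ, (∀ i, z i = -1 ∨ z i = 1) ∧ ∀ j, ∃ i, W j i * z i = -1) := by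
  refine exists_congr fun z => and_congr_right fun hz => ?_
  rw [add_zero, max_eq_right_iff, sum_max_zero_le_zero_iff]
  simp only [mem_univ, forall_const]
  refine forall_congr' fun j => ?_
  rw [← sum_mul_le_card_support_sub_one_iff_exists_mul_eq_neg_one (hW j) hz, hrow j]
  exact add_neg_nonpos_iff_le
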